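/- arXiv:1110.6549 — 4 statements merged into one kernel-verified Lean document; each statement's English description precedes it below -/
import Mathlib

section
/- One-dimensional localized uncertainty principle: for every bounded interval I and every λ > 0 there is a constant C(λ, I) > 0 such that for all ψ in the Schwartz space of ℝ, ⟨ψ, (p² + λχ_I)ψ⟩ ≥ C(λ, I)·⟨ψ, (1+x²)^{-1}ψ⟩, i.e. ‖ψ'‖² + λ∫_I |ψ|² ≥ C ∫ |ψ(x)|²/(1+x²) dx. -/
/-!
If `H` is bounded and solves the Riccati equation `H' = V + H²`, then expanding
`0 ≤ ‖f' + H f‖²` and integrating the exact derivative `(H ‖f‖²)' = (V + H²) ‖f‖² + 2 H ⟪f, f'⟫`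
gives `∫ V ‖f‖² ≤ ∫ ‖f'‖²`. With `t = s (x - m)`, `m` the midpoint of `[a, b]`, the field
`H = -β s t / (1 + t²)` has potential `V = β s² ((1 - β) t² - 1) / (1 + t²)²`. Choosing `β s²` small
makes `V ≥ -λ/2` on `[a, b]`, and choosing `s` large makes `t² ≥ 3` off `[a, b]`, where then
`V ≳ 1 / (1 + x²)`; hence `V + λ χ_{[a,b]} ≥ C / (1 + x²)`.
-/

open MeasureTheory Set

section GroundState

variable {E : Type*} [NormedAddCommGroup E] [InnerProductSpace ℝ E]

lemma measurable_of_hasDerivAt_add_sq {H V : ℝ → ℝ} (hH : ∀ x, HasDerivAt H (V x + H x ^ 2) x) :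
    Measurable V := by
  have hV : V = fun x => deriv H x - H x ^ 2 := funext fun x => by rw [(hH x).deriv]; ring
  have hHc : Continuous H := continuous_iff_continuousAt.2 fun x => (hH x).continuousAt
  rw [hV]
  exact (measurable_deriv H).sub (hHc.measurable.pow_const 2)

lemma integrable_inner_of_memLp_two {α : Type*} [MeasurableSpace α] {μ : Measure α} {f g : α → E}
    (hf : MemLp f 2 μ) (hg : MemLp g 2 μ) : Integrable (fun x => inner ℝ (f x) (g x)) μ := by
  refine (hf.norm.integrable_mul hg.norm).mono' (hf.1.inner hg.1) (ae_of_all _ fun x => ?_)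
  exact norm_inner_le_norm _ _

theorem integral_mul_norm_sq_le_integral_norm_deriv_sq {H V : ℝ → ℝ} {M K : ℝ}
    (hH : ∀ x, HasDerivAt H (V x + H x ^ 2) x) (hHM : ∀ x, |H x| ≤ M) (hVK : ∀ x, |V x| ≤ K)
    {f f' : ℝ → E} (hf : ∀ x, HasDerivAt f (f' x) x) (hf2 : MemLp f 2) (hf'2 : MemLp f' 2) :
    ∫ x, V x * ‖f x‖ ^ 2 ≤ ∫ x, ‖f' x‖ ^ 2 := by
  have hHc : Continuous H := continuous_iff_continuousAt.2 fun x => (hH x).continuousAt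
  have hVm := measurable_of_hasDerivAt_add_sq hH
  have hf_sq : Integrable fun x => ‖f x‖ ^ 2 := (memLp_two_iff_integrable_sq_norm hf2.1).1 hf2
  have hf'_sq : Integrable fun x => ‖f' x‖ ^ 2 := (memLp_two_iff_integrable_sq_norm hf'2.1).1 hf'2
  set D : ℝ → ℝ := fun x => (V x + H x ^ 2) * ‖f x‖ ^ 2 + H x * (2 * inner ℝ (f x) (f' x))
  have hD : ∀ x, HasDerivAt (fun y => H y * ‖f y‖ ^ 2) (D x) x := fun x =>
    (hH x).mul (hf x).norm_sq
  have hH_bdd : ∀ᵐ x, ‖H x‖ ≤ M := ae_of_all _ hHM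
  have hD_int : Integrable D := by
    refine Integrable.add ?_ ?_
    · refine hf_sq.bdd_mul (c := K + M ^ 2)
        (hVm.add (hHc.measurable.pow_const 2)).aestronglyMeasurable (ae_of_all _ fun x => ?_)
      rw [Real.norm_eq_abs]
      refine (abs_add_le _ _).trans (add_le_add (hVK x) ?_)
      rw [abs_pow]
      exact pow_le_pow_left₀ (abs_nonneg _) (hHM x) 2
    · exact ((integrable_inner_of_memLp_two hf2 hf'2).const_mul 2).bdd_mul
        hHc.aestronglyMeasurable hH_bdd
  have hD_zero : ∫ x, D x = 0 :=
    integral_eq_zero_of_hasDerivAt_of_integrable hD hD_int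
      (hf_sq.bdd_mul hHc.aestronglyMeasurable hH_bdd)
  have hpt : ∀ x, V x * ‖f x‖ ^ 2 ≤ ‖f' x‖ ^ 2 + D x := by
    intro x
    have h := norm_add_sq_real (f' x) (H x • f x)
    rw [inner_smul_right, norm_smul, real_inner_comm, mul_pow, Real.norm_eq_abs, sq_abs] at h
    nlinarith [sq_nonneg ‖f' x + H x • f x‖]
  calc ∫ x, V x * ‖f x‖ ^ 2 ≤ ∫ x, (‖f' x‖ ^ 2 + D x) :=
        integral_mono (hf_sq.bdd_mul hVm.aestronglyMeasurable (ae_of_all _ hVK))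
          (hf'_sq.add hD_int) hpt
    _ = ∫ x, ‖f' x‖ ^ 2 := by rw [integral_add hf'_sq hD_int, hD_zero, add_zero]

end GroundState

noncomputable def riccatiField (β s m x : ℝ) : ℝ :=
  -(β * s * (s * (x - m))) / (1 + (s * (x - m)) ^ 2)

noncomputable def riccatiPotential (β s m x : ℝ) : ℝ :=
  β * s ^ 2 * ((1 - β) * (s * (x - m)) ^ 2 - 1) / (1 + (s * (x - m)) ^ 2) ^ 2

section RiccatiField

variable (β s m : ℝ)

lemma hasDerivAt_riccatiField (x : ℝ) :
    HasDerivAt (riccatiField β s m) (riccatiPotential β s m x + riccatiField β s m x ^ 2) x := by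
  have ht : HasDerivAt (fun y => s * (y - m)) s x := by
    simpa using ((hasDerivAt_id x).sub_const m).const_mul s
  have hnum : HasDerivAt (fun y => -(β * s * (s * (y - m)))) (-(β * s * s)) x :=
    (ht.const_mul (β * s)).neg
  have hden : HasDerivAt (fun y => 1 + (s * (y - m)) ^ 2) (2 * (s * (x - m)) * s) x := by
    simpa using (ht.pow 2).const_add 1
  refine (hnum.div hden (by positivity)).congr_deriv ?_
  unfold riccatiField riccatiPotential
  field_simp
  ring

variable {β s m}

lemma abs_riccatiField_le (hβ : 0 ≤ β) (hs : 0 ≤ s) (x : ℝ) : |riccatiField β s m x| ≤ β * s := by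
  set t := s * (x - m)
  have hden : 0 < 1 + t ^ 2 := by positivity
  unfold riccatiField
  rw [abs_div, abs_of_pos hden, div_le_iff₀ hden, abs_neg, abs_mul, abs_of_nonneg (by positivity)]
  have : |t| ≤ 1 + t ^ 2 := by nlinarith [sq_abs t, sq_nonneg (|t| - 1)]
  nlinarith [mul_le_mul_of_nonneg_left this (mul_nonneg hβ hs), sq_nonneg t]

lemma abs_riccatiPotential_le (hβ₀ : 0 ≤ β) (hβ₁ : β ≤ 1) (x : ℝ) :
    |riccatiPotential β s m x| ≤ β * s ^ 2 := by
  set t := s * (x - m)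
  have hden : 0 < (1 + t ^ 2) ^ 2 := by positivity
  unfold riccatiPotential
  rw [abs_div, abs_of_pos hden, div_le_iff₀ hden, abs_mul, abs_of_nonneg (by positivity)]
  have : |(1 - β) * t ^ 2 - 1| ≤ (1 + t ^ 2) ^ 2 := by
    rw [abs_le]; constructor <;> nlinarith [sq_nonneg t, sq_nonneg (t ^ 2)]
  exact mul_le_mul_of_nonneg_left this (by positivity)

lemma one_add_sq_sub_le (x m : ℝ) : 1 + (x - m) ^ 2 ≤ 2 * (1 + m ^ 2) * (1 + x ^ 2) := by
  nlinarith [sq_nonneg (x + m), sq_nonneg (m * x)]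

lemma le_riccatiPotential (hβ₀ : 0 ≤ β) (hβ : β ≤ 1 / 2) (hs : 1 ≤ s) {x : ℝ}
    (hx : 3 ≤ (s * (x - m)) ^ 2) :
    β / (16 * (1 + m ^ 2) * (1 + x ^ 2)) ≤ riccatiPotential β s m x := by
  set t := s * (x - m)
  have ht_le : 1 + t ^ 2 ≤ s ^ 2 * (2 * (1 + m ^ 2) * (1 + x ^ 2)) := calc
    1 + t ^ 2 ≤ s ^ 2 * (1 + (x - m) ^ 2) := by
      nlinarith [show t ^ 2 = s ^ 2 * (x - m) ^ 2 by ring]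
    _ ≤ _ := by gcongr; exact one_add_sq_sub_le x m
  have ht_far : 1 + t ^ 2 ≤ 8 * ((1 - β) * t ^ 2 - 1) := by nlinarith
  unfold riccatiPotential
  rw [div_le_div_iff₀ (by positivity) (by positivity)]
  calc β * (1 + t ^ 2) ^ 2
      = β * ((1 + t ^ 2) * (1 + t ^ 2)) := by ring
    _ ≤ β * ((s ^ 2 * (2 * (1 + m ^ 2) * (1 + x ^ 2))) * (8 * ((1 - β) * t ^ 2 - 1))) := by
        gcongr β * ?_
        exact mul_le_mul ht_le ht_far (by positivity) (by positivity)
    _ = β * s ^ 2 * ((1 - β) * t ^ 2 - 1) * (16 * (1 + m ^ 2) * (1 + x ^ 2)) := by ring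

end RiccatiField

theorem exists_riccati_potential {a b lam : ℝ} (hab : a < b) (hlam : 0 < lam) :
    ∃ H V : ℝ → ℝ, ∃ M K C : ℝ, 0 < C ∧ (∀ x, HasDerivAt H (V x + H x ^ 2) x) ∧
      (∀ x, |H x| ≤ M) ∧ (∀ x, |V x| ≤ K) ∧
      ∀ x, C / (1 + x ^ 2) ≤ V x + lam * (Icc a b).indicator 1 x := by
  set m := (a + b) / 2 with hm
  set s := 1 + 4 / (b - a) with hs_def
  set β := min (1 / 2) (lam / (2 * s ^ 2))
  set C := min (β / (16 * (1 + m ^ 2))) (lam / 2)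
  have hba : 0 < b - a := by linarith
  have hs : 1 ≤ s := le_add_of_nonneg_right (by positivity)
  have hβ₀ : 0 < β := lt_min (by norm_num) (by positivity)
  have hβ_half : β ≤ 1 / 2 := min_le_left _ _
  have hβs : β * s ^ 2 ≤ lam / 2 := by
    have := min_le_right (1 / 2) (lam / (2 * s ^ 2))
    rw [le_div_iff₀ (by positivity)] at this
    linarith
  have hC : 0 < C := lt_min (by positivity) (by positivity)
  refine ⟨riccatiField β s m, riccatiPotential β s m, β * s, β * s ^ 2, C, hC,
    hasDerivAt_riccatiField β s m, abs_riccatiField_le hβ₀.le (by linarith),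
    abs_riccatiPotential_le hβ₀.le (by linarith), fun x => ?_⟩
  by_cases hx : x ∈ Icc a b
  · rw [indicator_of_mem hx, Pi.one_apply, mul_one]
    have hV := (abs_le.1 (abs_riccatiPotential_le (s := s) (m := m) hβ₀.le (by linarith) x)).1
    calc C / (1 + x ^ 2) ≤ C := div_le_self hC.le (le_add_of_nonneg_right (sq_nonneg x))
      _ ≤ lam / 2 := min_le_right _ _
      _ ≤ riccatiPotential β s m x + lam := by linarith
  · rw [indicator_of_notMem hx, mul_zero, add_zero]
    have hdist : (b - a) / 2 ≤ |x - m| := by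
      rw [mem_Icc, not_and_or, not_le, not_le] at hx
      rw [le_abs']
      rcases hx with h | h
      · left; linarith [hm]
      · right; linarith [hm]
    have hfar : 2 ≤ s * |x - m| := calc
      2 ≤ s * ((b - a) / 2) := by
        have : s * (b - a) = b - a + 4 := by rw [hs_def]; field_simp
        linarith
      _ ≤ s * |x - m| := by gcongr
    have hfar' : 3 ≤ (s * (x - m)) ^ 2 := by
      rw [mul_pow, ← sq_abs (x - m), ← mul_pow]
      nlinarith
    calc C / (1 + x ^ 2) ≤ β / (16 * (1 + m ^ 2)) / (1 + x ^ 2) := by gcongr; exact min_le_left _ _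
      _ = β / (16 * (1 + m ^ 2) * (1 + x ^ 2)) := div_div _ _ _
      _ ≤ riccatiPotential β s m x := le_riccatiPotential hβ₀.le hβ_half hs hfar'

theorem exists_localized_hardy_inequality {E : Type*} [NormedAddCommGroup E]
    [InnerProductSpace ℝ E] {a b lam : ℝ} (hab : a < b) (hlam : 0 < lam) :
    ∃ C > 0, ∀ f f' : ℝ → E,
      (∀ x, HasDerivAt f (f' x) x) → MemLp f 2 → MemLp f' 2 →
      C * ∫ x, ‖f x‖ ^ 2 / (1 + x ^ 2) ≤ (∫ x, ‖f' x‖ ^ 2) + lam * ∫ x in Icc a b, ‖f x‖ ^ 2 := by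
  obtain ⟨H, V, M, K, C, hC, hH, hHM, hVK, hCV⟩ := exists_riccati_potential hab hlam
  refine ⟨C, hC, fun f f' hf hf2 hf'2 => ?_⟩
  have hf_sq : Integrable fun x => ‖f x‖ ^ 2 := (memLp_two_iff_integrable_sq_norm hf2.1).1 hf2
  have hV_int : Integrable fun x => V x * ‖f x‖ ^ 2 :=
    hf_sq.bdd_mul (measurable_of_hasDerivAt_add_sq hH).aestronglyMeasurable (ae_of_all _ hVK)
  have hI_int : Integrable fun x => (Icc a b).indicator (fun y => ‖f y‖ ^ 2) x :=
    hf_sq.indicator measurableSet_Icc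
  have hw_int : Integrable fun x => C / (1 + x ^ 2) * ‖f x‖ ^ 2 := by
    refine hf_sq.bdd_mul (c := C)
      (continuous_const.div (by fun_prop) fun x => by positivity).aestronglyMeasurable
      (ae_of_all _ fun x => ?_)
    rw [Real.norm_of_nonneg (by positivity)]
    exact div_le_self hC.le (le_add_of_nonneg_right (sq_nonneg x))
  calc C * ∫ x, ‖f x‖ ^ 2 / (1 + x ^ 2)
      = ∫ x, C / (1 + x ^ 2) * ‖f x‖ ^ 2 := by
        rw [← integral_const_mul]; congr 1 with x; ring
    _ ≤ ∫ x, (V x * ‖f x‖ ^ 2 + lam * (Icc a b).indicator (fun y => ‖f y‖ ^ 2) x) := by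
        refine integral_mono hw_int (hV_int.add (hI_int.const_mul lam)) fun x => ?_
        have := mul_le_mul_of_nonneg_right (hCV x) (sq_nonneg ‖f x‖)
        rw [add_mul, mul_assoc, ← indicator_mul_left (Icc a b) 1 fun y => ‖f y‖ ^ 2] at this
        simpa only [Pi.one_apply, one_mul] using this
    _ = (∫ x, V x * ‖f x‖ ^ 2) + lam * ∫ x in Icc a b, ‖f x‖ ^ 2 := by
        rw [integral_add hV_int (hI_int.const_mul lam), integral_const_mul,
          integral_indicator measurableSet_Icc]
    _ ≤ (∫ x, ‖f' x‖ ^ 2) + lam * ∫ x in Icc a b, ‖f x‖ ^ 2 := by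
        grw [integral_mul_norm_sq_le_integral_norm_deriv_sq hH hHM hVK hf hf2 hf'2]

/-- One-dimensional localized uncertainty principle: for a bounded nondegenerate
interval `I = [a,b]` and `λ > 0` there is `C > 0` such that for all Schwartz `ψ`,
`‖ψ'‖² + λ ∫_I |ψ|² ≥ C ∫ |ψ(x)|²/(1+x²) dx`. -/
theorem stmt_7 (a b lam : ℝ) (hab : a < b) (hlam : 0 < lam) :
    ∃ C > 0, ∀ ψ : SchwartzMap ℝ ℂ,
      C * ∫ x : ℝ, ‖ψ x‖ ^ 2 / (1 + x ^ 2) ≤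
        (∫ x : ℝ, ‖deriv (⇑ψ) x‖ ^ 2) + lam * ∫ x in Set.Icc a b, ‖ψ x‖ ^ 2 := by
  obtain ⟨C, hC, hardy⟩ := exists_localized_hardy_inequality (E := ℂ) hab hlam
  refine ⟨C, hC, fun ψ => hardy ψ (deriv ψ) (fun x => ψ.differentiableAt.hasDerivAt) (ψ.memLp 2) ?_⟩
  have h := (SchwartzMap.derivCLM ℝ ℂ ψ).memLp 2
  rwa [show ⇑(SchwartzMap.derivCLM ℝ ℂ ψ) = deriv ψ from
    funext (SchwartzMap.derivCLM_apply (𝕜 := ℝ) ψ)] at h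
end

section
/- For V real-valued, bounded, and dilation analytic (meaning s ↦ e^{sA}Ve^{−sA} = V(e^{−s}·) extends boundedly and analytically to |Im s| ≤ β), the commutator with tanh(A/R) satisfies the algebraic identity: i[V, tanh(A/R)] = (i/2)·sech(A/R)·(V^{[−β]} − V^{[+β]})·sech(A/R), where V^{[β]} = e^{βA}Ve^{−βA}, β = 1/R. -/
/-!
Write `c = cosh(βA)`, `s = sinh(βA)` and `t = s c⁻¹`. Since `c` and `s` commute, so do `c⁻¹` and `s`,
hence `[V, t] = c⁻¹ (c V s - s V c) c⁻¹`. Expanding `c = (e^{βA} + e^{-βA})/2` and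
`s = (e^{βA} - e^{-βA})/2`, the terms `e^{±βA} V e^{±βA}` cancel and
`c V s - s V c = (e^{-βA} V e^{βA} - e^{βA} V e^{-βA})/2`.
-/

theorem commutator_mul_units_inv {A : Type*} [Ring A] (V s : A) (u : Aˣ) (hsu : Commute s u) :
    V * (s * ↑u⁻¹) - s * ↑u⁻¹ * V = ↑u⁻¹ * (u * V * s - s * V * u) * ↑u⁻¹ := by
  have hsu' : s * ↑u⁻¹ = ↑u⁻¹ * s := (hsu.units_inv_right).eq
  calc V * (s * ↑u⁻¹) - s * ↑u⁻¹ * V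
      = ↑u⁻¹ * ↑u * V * s * ↑u⁻¹ - ↑u⁻¹ * s * V * (u * ↑u⁻¹) := by
        rw [u.inv_mul, u.mul_inv, ← hsu']; noncomm_ring
    _ = ↑u⁻¹ * (u * V * s - s * V * u) * ↑u⁻¹ := by noncomm_ring

theorem cosh_mul_mul_sinh_sub_sinh_mul_mul_cosh {𝕜 A : Type*} [Field 𝕜] [Ring A] [Algebra 𝕜 A]
    (V e e' : A) :
    (2 : 𝕜)⁻¹ • (e + e') * V * ((2 : 𝕜)⁻¹ • (e - e'))
        - (2 : 𝕜)⁻¹ • (e - e') * V * ((2 : 𝕜)⁻¹ • (e + e'))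
      = (2 : 𝕜)⁻¹ • (e' * V * e - e * V * e') := by
  simp only [smul_mul_assoc, mul_smul_comm, add_mul, sub_mul, mul_add, mul_sub]
  rcases eq_or_ne (2 : 𝕜) 0 with h2 | h2
  · simp [h2]
  · match_scalars <;> field_simp <;> ring

theorem stmt_10_general {H : Type*} [NormedAddCommGroup H] [InnerProductSpace ℂ H]
    (V e e' c s cinv t : H →L[ℂ] H)
    (hee' : e * e' = 1) (he'e : e' * e = 1)
    (hc : c = (2 : ℂ)⁻¹ • (e + e')) (hs : s = (2 : ℂ)⁻¹ • (e - e'))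
    (hcinv : c * cinv = 1) (hcinv' : cinv * c = 1)
    (ht : t = s * cinv) :
    Complex.I • (V * t - t * V) =
      (Complex.I / 2) • (cinv * (e' * V * e - e * V * e') * cinv) := by
  have hee : Commute e e' := hee'.trans he'e.symm
  have hsc : Commute s c := by
    rw [hs, hc]
    exact (((Commute.refl e).add_right hee).sub_left (hee.symm.add_right (Commute.refl e'))
      |>.smul_left _).smul_right _
  have hcomm : V * (s * cinv) - s * cinv * V = cinv * (c * V * s - s * V * c) * cinv :=
    commutator_mul_units_inv V s ⟨c, cinv, hcinv, hcinv'⟩ hsc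
  rw [ht, hcomm, hc, hs, cosh_mul_mul_sinh_sub_sinh_mul_mul_cosh, mul_smul_comm, smul_mul_assoc,
    smul_smul, div_eq_mul_inv]

/-- Algebraic commutator identity `i[V, tanh(A/R)] = (i/2) sech(A/R) (V^{[-β]} - V^{[β]}) sech(A/R)`
with `β = 1/R`, formulated via the formal algebra of bounded operators on a Hilbert space:
`e` plays the role of `e^{βA}` (with inverse `e' = e^{-βA}`),
`c = cosh(βA) = (e+e')/2`, `s = sinh(βA) = (e-e')/2`, `cinv = sech(βA)`,
`t = tanh(βA) = s·cinv`, and `V^{[±β]} = e^{±βA} V e^{∓βA}`. -/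
theorem stmt_10 {H : Type*} [NormedAddCommGroup H] [InnerProductSpace ℂ H] [CompleteSpace H]
    (V e e' c s cinv t : H →L[ℂ] H)
    (hee' : e * e' = 1) (he'e : e' * e = 1)
    (hc : c = (2 : ℂ)⁻¹ • (e + e')) (hs : s = (2 : ℂ)⁻¹ • (e - e'))
    (hcinv : c * cinv = 1) (hcinv' : cinv * c = 1)
    (ht : t = s * cinv) :
    Complex.I • (V * t - t * V) =
      (Complex.I / 2) • (cinv * (e' * V * e - e * V * e') * cinv) :=
  stmt_10_general V e e' c s cinv t hee' he'e hc hs hcinv hcinv' ht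
end

section
/- The Schwarzschild potential V_ℓ(r) = (1 − 2M/r)(2M/r³ + ℓ(ℓ+1)/r²) for r > 2M, M > 0, ℓ ≥ 0 an integer, is positive on (2M, ∞), tends to 0 as r → 2M⁺ and as r → ∞, and for ℓ ≥ 1 has a unique critical point r_ℓ ∈ (2M, ∞) which is a global maximum (one-hump property). For ℓ → ∞ the maximum point converges to 3M. -/
open Filter

/-- The Schwarzschild (Regge–Wheeler) potential at angular momentum `ℓ`. -/
noncomputable def schwPot (M : ℝ) (ℓ : ℕ) (r : ℝ) : ℝ :=
  (1 - 2 * M / r) * (2 * M / r ^ 3 + (ℓ * (ℓ + 1) : ℝ) / r ^ 2)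

/-!
With `L = ℓ(ℓ+1)` one has `r⁵ V_ℓ'(r) = -2 q(r)` for the quadratic
`q(r) = L r² - 3M(L-1) r - 8M²`. As `q(0) = -8M² < 0` and `L > 0`, `q` has exactly one positive
root `r_ℓ`, given by the quadratic formula, and `V_ℓ'` changes sign from `+` to `-` there.
The formula gives `2M < r_ℓ`, and `q(3M) = M² > 0` gives `r_ℓ < 3M`; then
`L r_ℓ (r_ℓ - 3M) = 8M² - 3M r_ℓ > -M²` forces `3M - M/(2L) < r_ℓ`, whence `r_ℓ → 3M`.
-/

open Set Topology

variable {M L r s ρ : ℝ} {ℓ : ℕ}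

lemma schwPot_pos (hM : 0 < M) (hr : 2 * M < r) : 0 < schwPot M ℓ r := by
  have hr0 : 0 < r := by linarith
  have : 2 * M / r < 1 := (div_lt_one hr0).mpr hr
  unfold schwPot
  exact mul_pos (by linarith) (by positivity)

lemma schwPot_two_mul (hM : M ≠ 0) : schwPot M ℓ (2 * M) = 0 := by
  simp [schwPot, hM]

lemma tendsto_schwPot_atTop : Tendsto (schwPot M ℓ) atTop (𝓝 0) := by
  have hinv : ∀ n : ℕ, n ≠ 0 → ∀ c : ℝ, Tendsto (fun r : ℝ => c / r ^ n) atTop (𝓝 0) :=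
    fun n hn c => tendsto_const_nhds.div_atTop (tendsto_pow_atTop hn)
  have h1 : Tendsto (fun r : ℝ => 2 * M / r) atTop (𝓝 0) := by
    simpa using hinv 1 one_ne_zero (2 * M)
  have := (tendsto_const_nhds (x := (1 : ℝ))).sub h1 |>.mul
    ((hinv 3 three_ne_zero (2 * M)).add (hinv 2 two_ne_zero (ℓ * (ℓ + 1) : ℝ)))
  simp only [sub_zero, add_zero, mul_zero] at this
  exact this

def schwQuad (M L r : ℝ) : ℝ :=
  L * r ^ 2 - 3 * M * (L - 1) * r - 8 * M ^ 2

lemma hasDerivAt_schwPot (hr : r ≠ 0) :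
    HasDerivAt (schwPot M ℓ) (-2 * schwQuad M (ℓ * (ℓ + 1)) r / r ^ 5) r := by
  have key : HasDerivAt (schwPot M ℓ) _ r :=
    (((hasDerivAt_inv hr).const_mul (2 * M)).const_sub 1).mul
      ((((hasDerivAt_pow 3 r).inv (pow_ne_zero _ hr)).const_mul (2 * M)).add
        (((hasDerivAt_pow 2 r).inv (pow_ne_zero _ hr)).const_mul (ℓ * (ℓ + 1) : ℝ)))
  convert key using 1
  simp only [schwQuad]
  field_simp
  ring

lemma deriv_schwPot (hr : r ≠ 0) :
    deriv (schwPot M ℓ) r = -2 * schwQuad M (ℓ * (ℓ + 1)) r / r ^ 5 :=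
  (hasDerivAt_schwPot hr).deriv

lemma tendsto_schwPot_nhdsGT (hM : M ≠ 0) :
    Tendsto (schwPot M ℓ) (𝓝[>] (2 * M)) (𝓝 0) := by
  have hc := (hasDerivAt_schwPot (M := M) (ℓ := ℓ) (mul_ne_zero two_ne_zero hM)).continuousAt
  have := hc.continuousWithinAt (s := Ioi (2 * M))
  rwa [ContinuousWithinAt, schwPot_two_mul hM] at this

lemma exists_schwQuad_eq_sub_mul (hM : M ≠ 0) (hL : 0 ≤ L) (hρ0 : 0 < ρ)
    (hρ : schwQuad M L ρ = 0) (hs : 0 < s) :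
    ∃ c, 0 < c ∧ schwQuad M L s = (s - ρ) * c := by
  simp only [schwQuad] at hρ ⊢
  refine ⟨L * (s + ρ) - 3 * M * (L - 1), ?_, by linear_combination hρ⟩
  have hρ' : ρ * (L * ρ - 3 * M * (L - 1)) = 8 * M ^ 2 := by linear_combination hρ
  have : 0 < L * ρ - 3 * M * (L - 1) := by
    refine pos_of_mul_pos_right (a := ρ) ?_ hρ0.le
    rw [hρ']; positivity
  nlinarith

/-- The positive root of `schwQuad M L`, by the quadratic formula. -/
noncomputable def critRadius (M L : ℝ) : ℝ :=
  (3 * M * (L - 1) + √(9 * M ^ 2 * (L - 1) ^ 2 + 32 * L * M ^ 2)) / (2 * L)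

lemma schwQuad_critRadius (hL : 0 < L) : schwQuad M L (critRadius M L) = 0 := by
  have hD : 0 ≤ 9 * M ^ 2 * (L - 1) ^ 2 + 32 * L * M ^ 2 := by positivity
  have hsq := Real.sq_sqrt hD
  simp only [schwQuad, critRadius]
  set t := √(9 * M ^ 2 * (L - 1) ^ 2 + 32 * L * M ^ 2)
  field_simp
  linear_combination hsq

lemma two_mul_lt_critRadius (hM : 0 < M) (hL : 0 < L) : 2 * M < critRadius M L := by
  rw [critRadius, lt_div_iff₀ (by positivity)]
  have : M * (L + 3) < √(9 * M ^ 2 * (L - 1) ^ 2 + 32 * L * M ^ 2) :=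
    (Real.lt_sqrt (by positivity)).mpr (by nlinarith [mul_pos (mul_pos hM hM) hL])
  linarith

lemma critRadius_pos (hM : 0 < M) (hL : 0 < L) : 0 < critRadius M L := by
  linarith [two_mul_lt_critRadius hM hL]

lemma schwQuad_eq_sub_critRadius_mul (hM : 0 < M) (hL : 0 < L) (hs : 0 < s) :
    ∃ c, 0 < c ∧ schwQuad M L s = (s - critRadius M L) * c :=
  exists_schwQuad_eq_sub_mul hM.ne' hL.le (critRadius_pos hM hL) (schwQuad_critRadius hL) hs

lemma critRadius_mem_Ioo (hM : 0 < M) (hL : 0 < L) :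
    critRadius M L ∈ Ioo (3 * M - M / (2 * L)) (3 * M) := by
  set ρ := critRadius M L
  have h2M := two_mul_lt_critRadius hM hL
  have hlt : ρ < 3 * M := by
    obtain ⟨c, hc, h⟩ := schwQuad_eq_sub_critRadius_mul hM hL (s := 3 * M) (by positivity)
    have : schwQuad M L (3 * M) = M ^ 2 := by simp only [schwQuad]; ring
    nlinarith
  have hρ : L * ρ * (ρ - 3 * M) = 8 * M ^ 2 - 3 * M * ρ := by
    have := schwQuad_critRadius (M := M) hL
    simp only [schwQuad] at this
    linear_combination this
  refine ⟨?_, hlt⟩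
  rw [sub_lt_comm, lt_div_iff₀ (by positivity)]
  nlinarith [mul_lt_mul_of_pos_left h2M (mul_pos hL (sub_pos.mpr hlt))]

lemma tendsto_critRadius_atTop (hM : 0 < M) : Tendsto (critRadius M) atTop (𝓝 (3 * M)) := by
  have hlow : Tendsto (fun L => 3 * M - M / (2 * L)) atTop (𝓝 (3 * M)) := by
    simpa using tendsto_const_nhds.sub
      (tendsto_const_nhds.div_atTop (tendsto_id.const_mul_atTop (by norm_num : (0 : ℝ) < 2)))
  refine tendsto_of_tendsto_of_tendsto_of_le_of_le' hlow tendsto_const_nhds ?_ ?_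
  all_goals
    filter_upwards [eventually_gt_atTop 0] with L hL
    have := critRadius_mem_Ioo hM hL
  exacts [this.1.le, this.2.le]

lemma sign_deriv_schwPot (hM : 0 < M) (hℓ : 1 ≤ ℓ) (hs : 0 < s) :
    SignType.sign (deriv (schwPot M ℓ) s) = SignType.sign (critRadius M (ℓ * (ℓ + 1)) - s) := by
  have hL : (0 : ℝ) < ℓ * (ℓ + 1) := by positivity
  obtain ⟨c, hc, h⟩ := schwQuad_eq_sub_critRadius_mul hM hL hs
  rw [deriv_schwPot hs.ne', h,
    show -2 * ((s - critRadius M _) * c) / s ^ 5 = (critRadius M _ - s) * (2 * c / s ^ 5) by ring,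
    sign_mul, sign_pos (a := 2 * c / s ^ 5) (by positivity), mul_one]

/-- `V_ℓ` is positive on `(2M, ∞)`, vanishes at `2M⁺` and at `∞`, and for `ℓ ≥ 1` has a
unique critical point `r_ℓ` (a global maximum: `V_ℓ' > 0` before it, `V_ℓ' < 0` after),
with `r_ℓ → 3M` as `ℓ → ∞`. -/
theorem stmt_17 (M : ℝ) (hM : 0 < M) :
    (∀ ℓ : ℕ, ∀ r ∈ Set.Ioi (2 * M), 0 < schwPot M ℓ r) ∧
    (∀ ℓ : ℕ, Tendsto (schwPot M ℓ) (nhdsWithin (2 * M) (Set.Ioi (2 * M))) (nhds 0)) ∧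
    (∀ ℓ : ℕ, Tendsto (schwPot M ℓ) atTop (nhds 0)) ∧
    ∃ rc : ℕ → ℝ,
      (∀ ℓ : ℕ, 1 ≤ ℓ →
        rc ℓ ∈ Set.Ioi (2 * M) ∧
        deriv (schwPot M ℓ) (rc ℓ) = 0 ∧
        (∀ s ∈ Set.Ioi (2 * M), deriv (schwPot M ℓ) s = 0 → s = rc ℓ) ∧
        (∀ s ∈ Set.Ioo (2 * M) (rc ℓ), 0 < deriv (schwPot M ℓ) s) ∧
        (∀ s ∈ Set.Ioi (rc ℓ), deriv (schwPot M ℓ) s < 0)) ∧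
      Tendsto rc atTop (nhds (3 * M)) := by
  refine ⟨fun ℓ r hr => schwPot_pos hM hr, fun ℓ => tendsto_schwPot_nhdsGT hM.ne',
    fun ℓ => tendsto_schwPot_atTop, fun ℓ => critRadius M (ℓ * (ℓ + 1)), fun ℓ hℓ => ?_, ?_⟩
  · have hL : (0 : ℝ) < ℓ * (ℓ + 1) := by positivity
    have h2M := two_mul_lt_critRadius hM hL
    have hsign : ∀ s, 2 * M < s → SignType.sign (deriv (schwPot M ℓ) s)
        = SignType.sign (critRadius M (ℓ * (ℓ + 1)) - s) :=
      fun s hs => sign_deriv_schwPot hM hℓ (by linarith)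
    refine ⟨h2M, ?_, fun s hs h0 => ?_, fun s hs => ?_, fun s hs => ?_⟩
    · simpa using hsign _ h2M
    · have := hsign s hs
      rw [h0, sign_zero, eq_comm, sign_eq_zero_iff, sub_eq_zero] at this
      exact this.symm
    · exact sign_eq_one_iff.mp ((hsign s hs.1).trans (sign_eq_one_iff.mpr (sub_pos.mpr hs.2)))
    · exact sign_eq_neg_one_iff.mp
        ((hsign s (h2M.trans hs)).trans (sign_eq_neg_one_iff.mpr (sub_neg.mpr hs)))
  · exact (tendsto_critRadius_atTop hM).comp <| tendsto_natCast_atTop_atTop.atTop_mul_atTop₀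
      (tendsto_atTop_add_const_right _ 1 tendsto_natCast_atTop_atTop)
end

section
/- Addition-of-humps repulsivity in 1D: let V(x) = 2/(1+x²) + a/(1+|x−b|³) on ℝ with a, b > 0. Using the localized uncertainty bound (1/4)p² + 4x²/(1+x²)² ≥ (1/4)(1+x²)^{−2} as quadratic forms on H¹(ℝ), there exist a, b > 0 (e.g. a sufficiently small for fixed b) and ε > 0 such that 2p² − x·V'(x) ≥ ε⟨x⟩^{−4} as quadratic forms: for all ψ ∈ H¹(ℝ), 2‖ψ'‖² − ∫ xV'(x)|ψ(x)|² dx ≥ ε ∫ |ψ(x)|²(1+x²)^{−2} dx. -/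
open MeasureTheory

private lemma habs3 (x : ℝ) : HasDerivAt (fun y : ℝ => |y| ^ 3) (3 * (x * |x|)) x := by
  rcases lt_trichotomy x 0 with hx | hx | hx
  · have h : HasDerivAt (fun y : ℝ => -(y ^ 3)) (3 * (x * |x|)) x := by
      have h0 := (hasDerivAt_pow 3 x).neg
      have he : 3 * (x * |x|) = -(((3:ℕ):ℝ) * x ^ (3-1)) := by
        rw [abs_of_neg hx]; push_cast; ring
      rw [he]; exact h0
    refine h.congr_of_eventuallyEq ?_
    filter_upwards [Iio_mem_nhds hx] with y hy
    rw [abs_of_neg hy]; ring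
  · subst hx
    have h0 : HasDerivAt (fun y : ℝ => |y| ^ 3) 0 0 := by
      rw [hasDerivAt_iff_tendsto]
      apply squeeze_zero (g := fun y : ℝ => y ^ 2)
      · intro t; positivity
      · intro t
        rcases eq_or_ne t 0 with rfl | ht
        · simp
        · have h1 : ‖t - 0‖⁻¹ * ‖|t| ^ 3 - |(0:ℝ)| ^ 3 - (t - 0) • (0:ℝ)‖
              = |t|⁻¹ * |t| ^ 3 := by
            simp [Real.norm_eq_abs, abs_of_nonneg (pow_nonneg (abs_nonneg t) 3)]
          rw [h1]
          have : |t|⁻¹ * |t| ^ 3 = |t| ^ 2 := by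
            rw [pow_succ' |t| 2, sq_abs, ← mul_assoc, inv_mul_cancel₀ (abs_ne_zero.mpr ht), one_mul]
          rw [this, sq_abs]
      · simpa using ((continuous_pow 2).tendsto (0:ℝ))
    simpa using h0
  · have h : HasDerivAt (fun y : ℝ => y ^ 3) (3 * (x * |x|)) x := by
      have h0 := hasDerivAt_pow 3 x
      have he : 3 * (x * |x|) = ((3:ℕ):ℝ) * x ^ (3-1) := by
        rw [abs_of_pos hx]; push_cast; ring
      rw [he]; exact h0
    refine h.congr_of_eventuallyEq ?_
    filter_upwards [Ioi_mem_nhds hx] with y hy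
    rw [abs_of_pos hy]

private noncomputable def Wf (x : ℝ) : ℝ :=
  -(4*x)/(1+x^2)^2 - (1/32)*((x-1)*|x-1|)/(1+|x-1|^3)^2

private lemma hasDerivV (x : ℝ) :
    HasDerivAt (fun y : ℝ => 2 / (1 + y ^ 2) + 1 / 96 / (1 + |y - 1| ^ 3)) (Wf x) x := by
  have hne1 : (1 + x^2) ≠ 0 := by positivity
  have hne2 : (1 + |x-1|^3) ≠ 0 := by positivity
  have hd1 : HasDerivAt (fun y : ℝ => 1 + y^2) (2*x) x := by
    simpa using ((hasDerivAt_pow 2 x).const_add 1)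
  have hd2 : HasDerivAt (fun y : ℝ => 1 + |y - 1|^3) (3*((x-1)*|x-1|)) x := by
    have hcomp := (habs3 (x-1)).comp x ((hasDerivAt_id x).sub_const 1)
    simpa [Function.comp] using hcomp.const_add 1
  have h1 : HasDerivAt (fun y : ℝ => 2 / (1 + y^2))
      ((0 * (1+x^2) - 2*(2*x))/(1+x^2)^2) x := (hasDerivAt_const x 2).div hd1 hne1
  have h2 : HasDerivAt (fun y : ℝ => 1/96 / (1 + |y-1|^3))
      ((0 * (1+|x-1|^3) - 1/96*(3*((x-1)*|x-1|)))/(1+|x-1|^3)^2) x :=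
    (hasDerivAt_const x (1/96)).div hd2 hne2
  have h := h1.add h2
  have he : Wf x = (0 * (1+x^2) - 2*(2*x))/(1+x^2)^2
      + (0 * (1+|x-1|^3) - 1/96*(3*((x-1)*|x-1|)))/(1+|x-1|^3)^2 := by
    unfold Wf; ring
  rw [he]; exact h

private lemma key_ineq (x : ℝ) :
    x * Wf x ≤ -(4 * x ^ 2 / (1 + x ^ 2) ^ 2) + (1/8) / (1 + x ^ 2) ^ 2 := by
  have h1 : (0:ℝ) < (1 + x^2)^2 := by positivity
  have h2 : (0:ℝ) < (1 + |x-1|^3)^2 := by positivity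
  have hx2 : x * Wf x = -(4 * x ^ 2 / (1 + x ^ 2) ^ 2)
      + (-((1/32)*(x*((x-1)*|x-1|))))/(1+|x-1|^3)^2 := by
    unfold Wf; ring
  rw [hx2]
  have key : (-((1/32)*(x*((x-1)*|x-1|))))/(1+|x-1|^3)^2 ≤ (1/8) / (1 + x ^ 2) ^ 2 := by
    rcases le_or_gt x 0 with hx | hx
    · have habs : |x - 1| = -(x-1) := abs_of_nonpos (by linarith)
      rw [habs]
      have hnum : -((1/32)*(x*((x-1)*(-(x-1))))) ≤ 0 := by nlinarith [sq_nonneg (x-1)]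
      have hl : (-((1/32)*(x*((x-1)*(-(x-1))))))/(1+(-(x-1))^3)^2 ≤ 0 :=
        div_nonpos_of_nonpos_of_nonneg hnum (by positivity)
      have hr : (0:ℝ) ≤ (1/8) / (1 + x ^ 2) ^ 2 := by positivity
      linarith
    rcases le_or_gt 1 x with hx1 | hx1
    · have habs : |x - 1| = x - 1 := abs_of_nonneg (by linarith)
      rw [habs]
      have hnum : -((1/32)*(x*((x-1)*(x-1)))) ≤ 0 := by nlinarith [sq_nonneg (x-1)]
      have hl : (-((1/32)*(x*((x-1)*(x-1)))))/(1+(x-1)^3)^2 ≤ 0 :=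
        div_nonpos_of_nonpos_of_nonneg hnum (by positivity)
      have hr : (0:ℝ) ≤ (1/8) / (1 + x ^ 2) ^ 2 := by positivity
      linarith
    · have habs : |x - 1| = -(x-1) := abs_of_nonpos (by linarith)
      rw [habs]
      have ht : (0:ℝ) ≤ (-(x-1))^3 := pow_nonneg (by linarith) 3
      rw [div_le_div_iff₀ (by positivity) h1]
      have hxsq : x^2 ≤ 1 := by nlinarith
      have hx4 : x^4 ≤ 1 := by nlinarith [sq_nonneg x]
      have hA : (1+x^2)^2 ≤ 4 := by nlinarith
      have hB : (1:ℝ) ≤ (1+(-(x-1))^3)^2 := by nlinarith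
      nlinarith [sq_nonneg (x-1), mul_pos hx (sub_pos.mpr hx1),
        mul_nonneg (le_of_lt hx) (sq_nonneg (x-1)),
        mul_le_mul_of_nonneg_left hA (mul_nonneg (le_of_lt hx) (sq_nonneg (x-1)))]
  linarith [key]

private lemma bound_w (x : ℝ) : |x * Wf x| ≤ 2 := by
  have h1 : (0:ℝ) < (1+x^2)^2 := by positivity
  have h2 : (0:ℝ) < (1+|x-1|^3)^2 := by positivity
  have hsplit : x * Wf x = (-(4*x^2))/(1+x^2)^2
      + (-(1/32)*(x*((x-1)*|x-1|)))/(1+|x-1|^3)^2 := by unfold Wf; ring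
  have hA : |(-(4*x^2))/(1+x^2)^2| ≤ 1 := by
    rw [abs_div, abs_of_pos h1, div_le_one h1, abs_neg, abs_of_nonneg (by positivity : (0:ℝ) ≤ 4*x^2)]
    nlinarith [sq_nonneg (1-x^2)]
  have hB : |(-(1/32)*(x*((x-1)*|x-1|)))/(1+|x-1|^3)^2| ≤ 1 := by
    rw [abs_div, abs_of_pos h2, div_le_one h2]
    have hxle : |x| ≤ |x-1| + 1 := by
      calc |x| = |(x-1) + 1| := by ring_nf
        _ ≤ |x-1| + |(1:ℝ)| := abs_add_le _ _
        _ = |x-1| + 1 := by rw [abs_one]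
    have hval : |(-(1/32)*(x*((x-1)*|x-1|)))| = (1/32) * (|x| * (x-1)^2) := by
      rw [abs_mul, abs_mul, abs_mul, abs_neg, abs_abs]
      rw [show |x-1| * |x-1| = (x-1)^2 by rw [← abs_mul, ← sq, abs_of_nonneg (sq_nonneg _)]]
      norm_num [mul_assoc]
    rw [hval]
    have hu : 0 ≤ |x-1| := abs_nonneg _
    have hsq : (x-1)^2 = |x-1|^2 := (sq_abs _).symm
    rw [hsq]
    nlinarith [mul_nonneg hu (sq_nonneg (|x-1| - 1)), sq_nonneg (|x-1| - 1/2),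
      sq_nonneg (|x-1|^3), mul_le_mul_of_nonneg_right hxle (sq_nonneg |x-1|),
      pow_nonneg hu 3, pow_nonneg hu 6, abs_nonneg x]
  calc |x * Wf x| = |(-(4*x^2))/(1+x^2)^2 + (-(1/32)*(x*((x-1)*|x-1|)))/(1+|x-1|^3)^2| := by
        rw [hsplit]
    _ ≤ |(-(4*x^2))/(1+x^2)^2| + |(-(1/32)*(x*((x-1)*|x-1|)))/(1+|x-1|^3)^2| := abs_add_le _ _
    _ ≤ 2 := by linarith

/-- Addition-of-humps repulsivity in 1D for `V(x) = 2/(1+x²) + a/(1+|x-b|³)`: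
given the localized uncertainty bound `(1/4)p² + 4x²/(1+x²)² ≥ (1/4)(1+x²)⁻²`,
there are `a, b > 0` and `ε > 0` with `2p² - xV'(x) ≥ ε⟨x⟩⁻⁴` as quadratic forms. -/
theorem stmt_19
    (huncert : ∀ ψ : SchwartzMap ℝ ℂ,
      (1 / 4) * ∫ x : ℝ, ‖ψ x‖ ^ 2 / (1 + x ^ 2) ^ 2 ≤
        (1 / 4) * (∫ x : ℝ, ‖deriv (⇑ψ) x‖ ^ 2) +
          ∫ x : ℝ, (4 * x ^ 2 / (1 + x ^ 2) ^ 2) * ‖ψ x‖ ^ 2) :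
    ∃ a b ε : ℝ, 0 < a ∧ 0 < b ∧ 0 < ε ∧
      ∀ ψ : SchwartzMap ℝ ℂ,
        ε * ∫ x : ℝ, ‖ψ x‖ ^ 2 / (1 + x ^ 2) ^ 2 ≤
          2 * (∫ x : ℝ, ‖deriv (⇑ψ) x‖ ^ 2) -
            ∫ x : ℝ,
              (x * deriv (fun y : ℝ => 2 / (1 + y ^ 2) + a / (1 + |y - b| ^ 3)) x) *
                ‖ψ x‖ ^ 2 := by
  refine ⟨1/96, 1, 1/8, by norm_num, by norm_num, by norm_num, ?_⟩
  intro ψ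
  have hdV : deriv (fun y : ℝ => 2 / (1 + y ^ 2) + 1 / 96 / (1 + |y - 1| ^ 3)) = Wf :=
    funext fun x => (hasDerivV x).deriv
  rw [hdV]
  have hψcont : Continuous fun x : ℝ => ‖ψ x‖ ^ 2 := ψ.continuous.norm.pow 2
  have hψ2 : Integrable (fun x : ℝ => ‖ψ x‖ ^ 2) := by
    obtain ⟨C, hCpos, hC⟩ := ψ.decay 0 0
    refine (ψ.integrable.norm.const_mul C).mono' hψcont.aestronglyMeasurable ?_
    filter_upwards with x
    have hb : ‖ψ x‖ ≤ C := by simpa [norm_iteratedFDeriv_zero] using hC x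
    rw [Real.norm_eq_abs, abs_of_nonneg (by positivity : (0:ℝ) ≤ ‖ψ x‖ ^ 2)]
    calc ‖ψ x‖ ^ 2 = ‖ψ x‖ * ‖ψ x‖ := sq ‖ψ x‖
      _ ≤ C * ‖ψ x‖ := mul_le_mul_of_nonneg_right hb (norm_nonneg _)
  have hcont1 : Continuous fun x : ℝ => ‖ψ x‖ ^ 2 / (1 + x ^ 2) ^ 2 :=
    hψcont.div (by continuity) (fun x => by positivity)
  have hint1 : Integrable (fun x : ℝ => ‖ψ x‖ ^ 2 / (1 + x ^ 2) ^ 2) := by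
    refine hψ2.mono' hcont1.aestronglyMeasurable ?_
    filter_upwards with x
    rw [Real.norm_eq_abs, abs_of_nonneg (by positivity)]
    exact div_le_self (by positivity) (by nlinarith [sq_nonneg x])
  have hcont3 : Continuous fun x : ℝ => (4 * x ^ 2 / (1 + x ^ 2) ^ 2) * ‖ψ x‖ ^ 2 :=
    (((continuous_const.mul (continuous_pow 2)).div (by continuity)
      (fun x => by positivity)).mul hψcont)
  have hint3 : Integrable (fun x : ℝ => (4 * x ^ 2 / (1 + x ^ 2) ^ 2) * ‖ψ x‖ ^ 2) := by
    refine hψ2.mono' hcont3.aestronglyMeasurable ?_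
    filter_upwards with x
    rw [Real.norm_eq_abs, abs_of_nonneg (by positivity)]
    have hw : 4 * x ^ 2 / (1 + x ^ 2) ^ 2 ≤ 1 := by
      rw [div_le_one (by positivity)]; nlinarith [sq_nonneg (1 - x^2)]
    calc (4 * x ^ 2 / (1 + x ^ 2) ^ 2) * ‖ψ x‖ ^ 2 ≤ 1 * ‖ψ x‖ ^ 2 :=
          mul_le_mul_of_nonneg_right hw (by positivity)
      _ = ‖ψ x‖ ^ 2 := one_mul _
  have hcontW : Continuous Wf := by
    unfold Wf
    apply Continuous.sub
    · exact (continuous_const.mul continuous_id).neg.div (by continuity)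
        (fun x => by positivity)
    · refine (continuous_const.mul ((continuous_id.sub continuous_const).mul
        (continuous_id.sub continuous_const).abs)).div ?_ (fun x => by positivity)
      exact (continuous_const.add ((continuous_id.sub continuous_const).abs.pow 3)).pow 2
  have hint4 : Integrable (fun x : ℝ => (x * Wf x) * ‖ψ x‖ ^ 2) := by
    refine (hψ2.const_mul 2).mono'
      (((continuous_id.mul hcontW).mul hψcont).aestronglyMeasurable) ?_
    filter_upwards with x
    rw [Real.norm_eq_abs, abs_mul, abs_of_nonneg (by positivity : (0:ℝ) ≤ ‖ψ x‖ ^ 2)]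
    exact mul_le_mul_of_nonneg_right (bound_w x) (by positivity)
  have hI2 : 0 ≤ ∫ x : ℝ, ‖deriv (⇑ψ) x‖ ^ 2 := integral_nonneg fun x => by positivity
  have hmono : (∫ x : ℝ, (x * Wf x) * ‖ψ x‖ ^ 2) ≤
      ∫ x : ℝ, ((1/8) * (‖ψ x‖ ^ 2 / (1 + x ^ 2) ^ 2)
        - (4 * x ^ 2 / (1 + x ^ 2) ^ 2) * ‖ψ x‖ ^ 2) := by
    refine integral_mono hint4 ((hint1.const_mul _).sub hint3) fun x => ?_
    have hk := key_ineq x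
    calc (x * Wf x) * ‖ψ x‖ ^ 2
        ≤ (-(4 * x ^ 2 / (1 + x ^ 2) ^ 2) + (1/8) / (1 + x ^ 2) ^ 2) * ‖ψ x‖ ^ 2 :=
          mul_le_mul_of_nonneg_right hk (by positivity)
      _ = (1/8) * (‖ψ x‖ ^ 2 / (1 + x ^ 2) ^ 2)
          - (4 * x ^ 2 / (1 + x ^ 2) ^ 2) * ‖ψ x‖ ^ 2 := by ring
  rw [integral_sub (hint1.const_mul _) hint3, integral_const_mul] at hmono
  have hu := huncert ψ
  linarith [hu, hI2, hmono]
end
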